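/- Let N ∈ ℕ, δt = T/N, and let u : (0,T) → E be a piecewise constant function into a normed space E with u(t) = u_{n+1/2} for t ∈ (n·δt, (n+1)·δt). Then for a.e. t ∈ (0, T−τ) with 0 < τ < T, u(t+τ) − u(t) = (1/2) ∑_{n=0}^{N−1} (χ_n(t,τ) + χ_{n+1}(t,τ)) (u_{n+1} − u_n), where u_{n+1/2} = (u_n + u_{n+1})/2 and χ_n(t,τ) = 1 iff n·δt ∈ [t, t+τ). -/
import Mathlib


open MeasureTheory

private lemma tele6 {E : Type*} [AddCommGroup E] (f : ℕ → E) (a b : ℕ) (hab : a ≤ b) :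
    ∑ n ∈ Finset.Ico a b, (f (n + 1) - f n) = f b - f a := by
  rw [Finset.sum_Ico_eq_sub _ hab, Finset.sum_range_sub, Finset.sum_range_sub]
  abel

private lemma loc6 (N : ℕ) (δt : ℝ) (hδ : 0 < δt) (s : ℝ) (hs0 : 0 < s)
    (hsN : s < N * δt) (hgrid : ∀ n ≤ N, s ≠ (n : ℝ) * δt) :
    ∃ j < N, (j : ℝ) * δt < s ∧ s < ((j : ℝ) + 1) * δt := by
  set j : ℕ := ⌊s / δt⌋.toNat with hj
  have hfl : (0:ℤ) ≤ ⌊s / δt⌋ := Int.floor_nonneg.mpr (le_of_lt (div_pos hs0 hδ))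
  have hjc : (j : ℝ) = (⌊s / δt⌋ : ℝ) := by
    rw [hj]; exact_mod_cast congrArg (Int.cast : ℤ → ℝ) (Int.toNat_of_nonneg hfl)
  have h1 : (j : ℝ) ≤ s / δt := by rw [hjc]; exact Int.floor_le _
  have h2 : s / δt < (j : ℝ) + 1 := by rw [hjc]; exact Int.lt_floor_add_one _
  have hjN : j < N := by
    have : (j : ℝ) < (N : ℝ) := lt_of_le_of_lt h1 (by
      rw [div_lt_iff₀ hδ] at *; linarith [(div_lt_iff₀ hδ).mpr hsN])
    exact_mod_cast this
  refine ⟨j, hjN, ?_, ?_⟩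
  · have hle : (j : ℝ) * δt ≤ s := by
      rw [← le_div_iff₀ hδ]; exact h1
    rcases lt_or_eq_of_le hle with h | h
    · exact h
    · exact absurd h.symm (hgrid j hjN.le)
  · rw [← div_lt_iff₀ hδ] at *; linarith

/-- Telescoping identity for time translates of a piecewise-constant-in-time
Crank–Nicholson approximation: if `u(t) = (u_n + u_{n+1})/2` on `(nδt,(n+1)δt)`,
then for a.e. `t ∈ (0, T-τ)`,
`u(t+τ) - u(t) = (1/2) ∑_{n=0}^{N-1} (χ_n(t,τ) + χ_{n+1}(t,τ)) (u_{n+1} - u_n)`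
where `χ_n(t,τ) = 1` iff `n·δt ∈ [t, t+τ)`. -/
theorem stmt_6
    (E : Type*) [NormedAddCommGroup E] [NormedSpace ℝ E]
    (N : ℕ) (hN : 0 < N) (T δt τ : ℝ) (hT : 0 < T) (hδt : δt = T / N)
    (hτ : 0 < τ) (hτT : τ < T)
    (uc : ℕ → E) (u : ℝ → E)
    (hu : ∀ n < N, ∀ t ∈ Set.Ioo ((n : ℝ) * δt) (((n : ℝ) + 1) * δt),
      u t = (2:ℝ)⁻¹ • (uc n + uc (n + 1))) :
    ∀ᵐ t ∂(volume.restrict (Set.Ioo (0:ℝ) (T - τ))),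
      u (t + τ) - u t =
        (2:ℝ)⁻¹ • ∑ n ∈ Finset.range N,
          (((if (n : ℝ) * δt ∈ Set.Ico t (t + τ) then (1:ℝ) else 0) +
            (if ((n : ℝ) + 1) * δt ∈ Set.Ico t (t + τ) then (1:ℝ) else 0)) •
              (uc (n + 1) - uc n)) := by
  have hNδ : (N : ℝ) * δt = T := by
    rw [hδt]; field_simp
  have hδ : 0 < δt := by
    rw [hδt]; positivity
  -- a.e. t avoids the grid shifted by 0 and τ
  have hgrid : ∀ᵐ t : ℝ, ∀ n ∈ Finset.range (N + 1),
      t ≠ (n : ℝ) * δt ∧ t + τ ≠ (n : ℝ) * δt := by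
    rw [Filter.eventually_all_finset]
    intro n _
    have h1 : ∀ᵐ t : ℝ, t ≠ (n : ℝ) * δt := by
      rw [MeasureTheory.ae_iff]
      simpa using measure_singleton ((n : ℝ) * δt)
    have h2 : ∀ᵐ t : ℝ, t ≠ (n : ℝ) * δt - τ := by
      rw [MeasureTheory.ae_iff]
      simpa using measure_singleton ((n : ℝ) * δt - τ)
    filter_upwards [h1, h2] with t ha hb
    exact ⟨ha, fun h => hb (by linarith)⟩
  filter_upwards [ae_restrict_of_ae hgrid,
    MeasureTheory.ae_restrict_mem measurableSet_Ioo] with t hg ht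
  obtain ⟨ht0, htT⟩ := ht
  have hgrid1 : ∀ n ≤ N, t ≠ (n : ℝ) * δt := fun n hn =>
    (hg n (Finset.mem_range.mpr (Nat.lt_succ_of_le hn))).1
  have hgrid2 : ∀ n ≤ N, t + τ ≠ (n : ℝ) * δt := fun n hn =>
    (hg n (Finset.mem_range.mpr (Nat.lt_succ_of_le hn))).2
  obtain ⟨k, hkN, hk1, hk2⟩ := loc6 N δt hδ t ht0 (by rw [hNδ]; linarith) hgrid1
  obtain ⟨m, hmN, hm1, hm2⟩ := loc6 N δt hδ (t + τ) (by linarith) (by rw [hNδ]; linarith) hgrid2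
  have hkm : k ≤ m := by
    by_contra h
    push_neg at h
    have : ((m : ℝ) + 1) * δt ≤ (k : ℝ) * δt := by
      have : (m : ℝ) + 1 ≤ (k : ℝ) := by exact_mod_cast h
      nlinarith
    linarith
  -- the characteristic function equivalences
  have hχ : ∀ n : ℕ, ((n : ℝ) * δt ∈ Set.Ico t (t + τ)) ↔ (k + 1 ≤ n ∧ n ≤ m) := by
    intro n
    constructor
    · rintro ⟨h1, h2⟩
      constructor
      · by_contra h
        push_neg at h
        have hnk : (n : ℝ) ≤ (k : ℝ) := by exact_mod_cast Nat.lt_succ_iff.mp h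
        nlinarith
      · by_contra h
        push_neg at h
        have hnm : (m : ℝ) + 1 ≤ (n : ℝ) := by exact_mod_cast h
        nlinarith
    · rintro ⟨h1, h2⟩
      have hn1 : (k : ℝ) + 1 ≤ (n : ℝ) := by exact_mod_cast h1
      have hn2 : (n : ℝ) ≤ (m : ℝ) := by exact_mod_cast h2
      constructor
      · nlinarith
      · nlinarith
  have hsum : ∑ n ∈ Finset.range N,
      (((if (n : ℝ) * δt ∈ Set.Ico t (t + τ) then (1:ℝ) else 0) +
        (if ((n : ℝ) + 1) * δt ∈ Set.Ico t (t + τ) then (1:ℝ) else 0)) •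
          (uc (n + 1) - uc n)) =
      (uc (m + 1) - uc (k + 1)) + (uc m - uc k) := by
    have hsplit : ∀ n ∈ Finset.range N,
        (((if (n : ℝ) * δt ∈ Set.Ico t (t + τ) then (1:ℝ) else 0) +
          (if ((n : ℝ) + 1) * δt ∈ Set.Ico t (t + τ) then (1:ℝ) else 0)) •
            (uc (n + 1) - uc n)) =
        (if n ∈ Finset.Ico (k + 1) (m + 1) then (uc (n + 1) - uc n) else 0) +
        (if n ∈ Finset.Ico k m then (uc (n + 1) - uc n) else 0) := by
      intro n _
      have e1 : ((n : ℝ) * δt ∈ Set.Ico t (t + τ)) ↔ n ∈ Finset.Ico (k + 1) (m + 1) := by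
        rw [hχ n, Finset.mem_Ico]; omega
      have e2 : (((n : ℝ) + 1) * δt ∈ Set.Ico t (t + τ)) ↔ n ∈ Finset.Ico k m := by
        have : ((n : ℝ) + 1) = ((n + 1 : ℕ) : ℝ) := by push_cast; ring
        rw [this, hχ (n + 1), Finset.mem_Ico]; omega
      rw [add_smul]
      congr 1
      · simp only [e1, ite_smul, one_smul, zero_smul]
      · simp only [e2, ite_smul, one_smul, zero_smul]
    rw [Finset.sum_congr rfl hsplit, Finset.sum_add_distrib,
      Finset.sum_ite_mem, Finset.sum_ite_mem,
      Finset.inter_eq_right.mpr (fun x hx => by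
        simp only [Finset.mem_Ico] at hx; exact Finset.mem_range.mpr (by omega)),
      Finset.inter_eq_right.mpr (fun x hx => by
        simp only [Finset.mem_Ico] at hx; exact Finset.mem_range.mpr (by omega)),
      tele6 uc (k + 1) (m + 1) (by omega), tele6 uc k m hkm]
  rw [hsum, hu k hkN t ⟨hk1, hk2⟩, hu m hmN (t + τ) ⟨hm1, hm2⟩]
  module
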